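/- Let G be a finite group and H ≤ G a subgroup with H ≠ {1}, H ≠ G, and H ∩ gHg⁻¹ = {1} for every g ∈ G∖H. For α ∈ Aut(H) set X_α := G ⊔ ((G×G)/Δ(H,α,H)) and Y := (G×G)/Δ(H), where G is the (G,G)-biset given by left and right multiplication. Then for all α, β ∈ Aut(H) there is an isomorphism of (G,G)-bisets (X_α ×_G X_β) ⊔ (Y ×_G Y) ⊔ Y ≅ X_{αβ} ⊔ (X_α ×_G Y) ⊔ (Y ×_G X_β); in particular, (X_α, Y) is an orthogonal pair, encoding the orthogonal unit γ_α = [Δ(G)] − [Δ(H)] + [Δ(H,α,H)] of B^Δ(G,G), and γ_α ·_G γ_β = γ_{αβ}. -/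

import Mathlib

open MulAction

/-- An isomorphism of `M`-sets: an equivariant bijection. -/
def IsoAsGSets (M X Y : Type*) [SMul M X] [SMul M Y] : Prop :=
  ∃ e : X ≃ Y, ∀ (m : M) (x : X), e (m • x) = m • e x

/-- The twisted diagonal subgroup `Δ(R,α,S) = {(α s, s) | s ∈ S}` of `G × H`,
for an isomorphism `α : S ≃* R`. -/
def twistedDiagonal {G H : Type*} [Group G] [Group H] (R : Subgroup G) (S : Subgroup H)
    (α : S ≃* R) : Subgroup (G × H) :=
  ((R.subtype.comp α.toMonoidHom).prod S.subtype).range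

/-- `Δ(G,φ,H) = {(φ h, h) | h ∈ H} ≤ G × H` for an isomorphism `φ : H ≃* G`. -/
def fullTwistedDiagonal {G H : Type*} [Group G] [Group H] (φ : H ≃* G) : Subgroup (G × H) :=
  (φ.toMonoidHom.prod (MonoidHom.id H)).range

/-- The diagonal subgroup `Δ(R) = {(r,r) | r ∈ R} ≤ G × G`. -/
def diagSubgroup {G : Type*} [Group G] (R : Subgroup G) : Subgroup (G × G) :=
  (R.subtype.prod R.subtype).range

/-- A `(G,H)`-biset (i.e. a left `(G × H)`-set) is bifree if it is free as a left `G`-set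
and free as a right `H`-set. -/
def IsBifree (G H X : Type*) [Group G] [Group H] [MulAction (G × H) X] : Prop :=
  (∀ (g : G) (x : X), (g, (1 : H)) • x = x → g = 1) ∧
  (∀ (h : H) (x : X), ((1 : G), h) • x = x → h = 1)

section Tensor

variable (G H K : Type*) [Group G] [Group H] [Group K]
variable (X Y : Type*) [MulAction (G × H) X] [MulAction (H × K) Y]

/-- The relation on `X × Y` identifying `(x·h, y)` with `(x, h·y)`. -/
def bisetSetoid : Setoid (X × Y) where
  r p q := ∃ h : H, q.1 = ((1 : G), h) • p.1 ∧ q.2 = (h, (1 : K)) • p.2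
  iseqv := by
    constructor
    · intro p
      exact ⟨1, by simp [Prod.mk_one_one], by simp [Prod.mk_one_one]⟩
    · rintro p q ⟨h, h1, h2⟩
      exact ⟨h⁻¹, by simp [h1, smul_smul, Prod.mk_one_one], by simp [h2, smul_smul, Prod.mk_one_one]⟩
    · rintro p q r ⟨h, h1, h2⟩ ⟨h', h1', h2'⟩
      exact ⟨h' * h, by simp [h1, h1', smul_smul], by simp [h2, h2', smul_smul]⟩

/-- The tensor product `X ×_H Y` of a `(G,H)`-biset and an `(H,K)`-biset;
a `(G,K)`-biset. -/
def BisetTensor : Type _ :=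
  Quotient (bisetSetoid G H K X Y)

variable {G H K X Y}

/-- The class of `(x, y)` in `X ×_H Y`. -/
def BisetTensor.mk (p : X × Y) : BisetTensor G H K X Y :=
  Quotient.mk (bisetSetoid G H K X Y) p

variable (G H K X Y)

instance : SMul (G × K) (BisetTensor G H K X Y) :=
  ⟨fun a => Quotient.map (fun p => ((a.1, (1 : H)) • p.1, ((1 : H), a.2) • p.2))
    (by
      rintro p q ⟨h, h1, h2⟩
      exact ⟨h, by simp [h1, smul_smul], by simp [h2, smul_smul]⟩)⟩

variable {G H K X Y}

theorem BisetTensor.smul_mk (a : G × K) (p : X × Y) :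
    a • (BisetTensor.mk p : BisetTensor G H K X Y) =
      BisetTensor.mk ((a.1, (1 : H)) • p.1, ((1 : H), a.2) • p.2) :=
  rfl

variable (G H K X Y)

instance : MulAction (G × K) (BisetTensor G H K X Y) where
  one_smul q := Quotient.inductionOn q fun p => by
    refine Quotient.sound ⟨1, ?_, ?_⟩ <;> simp [Prod.mk_one_one]
  mul_smul a b q := Quotient.inductionOn q fun p => by
    refine Quotient.sound ⟨1, ?_, ?_⟩ <;> simp [smul_smul, Prod.mk_one_one]

end Tensor

section Op

/-- The opposite biset: a `(G,H)`-biset viewed as an `(H,G)`-biset via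
`h · x · g := g⁻¹ · x · h⁻¹`. -/
def BisetOp (H G X : Type*) : Type _ := (fun _ _ => X) H G

instance BisetOp.instMulAction {G H : Type*} [Group G] [Group H] (X : Type*)
    [MulAction (G × H) X] : MulAction (H × G) (BisetOp H G X) :=
  MulAction.compHom X (MulEquiv.prodComm : H × G ≃* G × H).toMonoidHom

instance BisetOp.instFinite {G H : Type*} (X : Type*) [Finite X] : Finite (BisetOp H G X) :=
  inferInstanceAs (Finite X)

end Op

section Grp

/-- The group `G` viewed as a `(G,G)`-biset via left and right multiplication. -/
structure BisetGrp (G : Type*) where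
  /-- the underlying group element -/
  val : G

instance BisetGrp.instSMul {G : Type*} [Group G] : SMul (G × G) (BisetGrp G) :=
  ⟨fun p x => ⟨p.1 * x.val * p.2⁻¹⟩⟩

theorem BisetGrp.smul_def {G : Type*} [Group G] (p : G × G) (x : BisetGrp G) :
    p • x = ⟨p.1 * x.val * p.2⁻¹⟩ := rfl

instance BisetGrp.instMulAction {G : Type*} [Group G] : MulAction (G × G) (BisetGrp G) where
  one_smul x := by
    cases x
    simp [BisetGrp.smul_def]
  mul_smul p q x := by
    cases x
    simp [BisetGrp.smul_def, mul_assoc]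

instance BisetGrp.instFinite {G : Type*} [Finite G] : Finite (BisetGrp G) :=
  Finite.of_equiv G ⟨fun g => ⟨g⟩, fun x => x.val, fun _ => rfl, fun _ => rfl⟩

end Grp

/-- A pair `(X,Y)` of `(G,H)`-bisets is an orthogonal pair if
`(X ×_H X°) ⊔ (Y ×_H Y°) ≅ G ⊔ (X ×_H Y°) ⊔ (Y ×_H X°)` as `(G,G)`-bisets;
this encodes the equation `([X] - [Y]) ·_H ([X] - [Y])° = [G]` in `B^Δ(G,G)`. -/
def IsOrthogonalPair (G H : Type*) [Group G] [Group H] (X Y : Type*)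
    [MulAction (G × H) X] [MulAction (G × H) Y] : Prop :=
  IsoAsGSets (G × G)
    (BisetTensor G H G X (BisetOp H G X) ⊕ BisetTensor G H G Y (BisetOp H G Y))
    (BisetGrp G ⊕ (BisetTensor G H G X (BisetOp H G Y) ⊕ BisetTensor G H G Y (BisetOp H G X)))

section Iota

/-- For a `G`-set `Z`, the `(G,G)`-biset `ι(Z) = G × Z` with action
`(g₁,g₂) • (g,z) = (g₁ g g₂⁻¹, g₂ • z)`. -/
structure IotaBiset (G Z : Type*) where
  /-- the group component -/
  fst : G
  /-- the `G`-set component -/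
  snd : Z

instance IotaBiset.instSMul {G Z : Type*} [Group G] [MulAction G Z] :
    SMul (G × G) (IotaBiset G Z) :=
  ⟨fun p x => ⟨p.1 * x.fst * p.2⁻¹, p.2 • x.snd⟩⟩

theorem IotaBiset.smul_def {G Z : Type*} [Group G] [MulAction G Z] (p : G × G)
    (x : IotaBiset G Z) : p • x = ⟨p.1 * x.fst * p.2⁻¹, p.2 • x.snd⟩ := rfl

instance IotaBiset.instMulAction {G Z : Type*} [Group G] [MulAction G Z] :
    MulAction (G × G) (IotaBiset G Z) where
  one_smul x := by
    cases x
    simp [IotaBiset.smul_def]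
  mul_smul p q x := by
    cases x
    simp [IotaBiset.smul_def, mul_assoc, mul_smul]

instance IotaBiset.instFinite {G Z : Type*} [Finite G] [Finite Z] : Finite (IotaBiset G Z) :=
  Finite.of_equiv (G × Z) ⟨fun p => ⟨p.1, p.2⟩, fun x => (x.fst, x.snd), fun _ => rfl,
    fun _ => rfl⟩

end Iota

/-!
For `Y_α = (G × G)/Δ(H,α,H)`, the `(G × G)`-orbit of `(a,b) ⊗ (c,d)` in `Y_α ×_G Y_β` is
determined by the double coset `H b⁻¹c H`. The double coset `H` contributes a copy of
`Y_{αβ}`. For `g ∉ H`, malnormality makes the decomposition `s * g * t` of the elements of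
`HgH` unique, so that this double coset contributes a free orbit `G × G`. Writing `F` for the
free part, distributivity of `×_G` over `⊔` and the unit laws for the biset `G` give
`X_α ×_G X_β ≅ G ⊔ Y_β ⊔ Y_α ⊔ Y_{αβ} ⊔ F`, `X_α ×_G Y ≅ Y ⊔ Y_α ⊔ F`,
`Y ×_G X_β ≅ Y ⊔ Y_β ⊔ F` and `Y ×_G Y ≅ Y ⊔ F`. Together with `X_α° ≅ X_{α⁻¹}` and `Y° ≅ Y`,
both sides of each claimed isomorphism become the same disjoint union up to reordering.
-/

namespace IsoAsGSets

variable {M X Y Z X' Y' : Type*} [SMul M X] [SMul M Y] [SMul M Z] [SMul M X'] [SMul M Y']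

theorem refl (M X : Type*) [SMul M X] : IsoAsGSets M X X :=
  ⟨Equiv.refl X, fun _ _ => rfl⟩

theorem symm (h : IsoAsGSets M X Y) : IsoAsGSets M Y X := by
  obtain ⟨e, he⟩ := h
  refine ⟨e.symm, fun m y => e.injective ?_⟩
  rw [he, Equiv.apply_symm_apply, Equiv.apply_symm_apply]

theorem trans (h₁ : IsoAsGSets M X Y) (h₂ : IsoAsGSets M Y Z) : IsoAsGSets M X Z := by
  obtain ⟨e, he⟩ := h₁
  obtain ⟨f, hf⟩ := h₂
  exact ⟨e.trans f, fun m x => by simp [he, hf]⟩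

theorem sumCongr (h₁ : IsoAsGSets M X X') (h₂ : IsoAsGSets M Y Y') :
    IsoAsGSets M (X ⊕ Y) (X' ⊕ Y') := by
  obtain ⟨e, he⟩ := h₁
  obtain ⟨f, hf⟩ := h₂
  exact ⟨e.sumCongr f, by rintro m (x | y) <;> simp [he, hf]⟩

end IsoAsGSets

namespace BisetTensor

variable {G H K : Type*} [Group G] [Group H] [Group K]
variable {X Y Z : Type*} [MulAction (G × H) X] [MulAction (H × K) Y]

theorem mk_eq_mk_smul (h : H) (x : X) (y : Y) :
    (mk (x, y) : BisetTensor G H K X Y) = mk (((1 : G), h) • x, (h, (1 : K)) • y) :=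
  Quotient.sound ⟨h, rfl, rfl⟩

@[elab_as_elim]
theorem induction_on {motive : BisetTensor G H K X Y → Prop} (z : BisetTensor G H K X Y)
    (mk : ∀ x y, motive (mk (x, y))) : motive z :=
  Quotient.inductionOn z fun p => mk p.1 p.2

def lift (f : X → Y → Z) (hf : ∀ (h : H) x y, f (((1 : G), h) • x) ((h, (1 : K)) • y) = f x y) :
    BisetTensor G H K X Y → Z :=
  Quotient.lift (fun p => f p.1 p.2) fun _ _ ⟨h, h₁, h₂⟩ => by simp only [h₁, h₂, hf]

@[simp]
theorem lift_mk (f : X → Y → Z)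
    (hf : ∀ (h : H) x y, f (((1 : G), h) • x) ((h, (1 : K)) • y) = f x y) (x : X) (y : Y) :
    lift (G := G) (K := K) f hf (mk (x, y)) = f x y :=
  rfl

end BisetTensor

section TensorIsos

variable {G H K : Type*} [Group G] [Group H] [Group K]

open BisetTensor

theorem IsoAsGSets.tensorCongr {X Y X' Y' : Type*} [MulAction (G × H) X] [MulAction (H × K) Y]
    [MulAction (G × H) X'] [MulAction (H × K) Y']
    (h₁ : IsoAsGSets (G × H) X X') (h₂ : IsoAsGSets (H × K) Y Y') :
    IsoAsGSets (G × K) (BisetTensor G H K X Y) (BisetTensor G H K X' Y') := by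
  obtain ⟨e, he⟩ := h₁
  obtain ⟨f, hf⟩ := h₂
  have hrel : ∀ p q : X × Y, bisetSetoid G H K X Y p q ↔
      bisetSetoid G H K X' Y' (e p.1, f p.2) (e q.1, f q.2) := fun p q =>
    exists_congr fun h => by rw [← he, ← hf, e.injective.eq_iff, f.injective.eq_iff]
  refine ⟨Quotient.congr (e.prodCongr f) hrel, fun m z => ?_⟩
  induction z using induction_on
  exact congrArg BisetTensor.mk (Prod.ext (he _ _) (hf _ _))

variable {A B C : Type*}

theorem isoAsGSets_tensor_sum_left [MulAction (G × H) A] [MulAction (G × H) B]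
    [MulAction (H × K) C] :
    IsoAsGSets (G × K) (BisetTensor G H K (A ⊕ B) C)
      (BisetTensor G H K A C ⊕ BisetTensor G H K B C) := by
  refine ⟨⟨lift (fun x c => x.elim (fun a => .inl (mk (a, c))) (fun b => .inr (mk (b, c))))
      ?_, Sum.elim (lift (fun a c => mk (.inl a, c)) ?_) (lift (fun b c => mk (.inr b, c)) ?_),
      ?_, ?_⟩, ?_⟩
  · rintro h (a | b) c
    exacts [congrArg Sum.inl (mk_eq_mk_smul h a c).symm,
      congrArg Sum.inr (mk_eq_mk_smul h b c).symm]
  · exact fun h a c => (mk_eq_mk_smul h (Sum.inl a) c).symm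
  · exact fun h b c => (mk_eq_mk_smul h (Sum.inr b) c).symm
  · intro z
    induction z using induction_on with | mk x c => cases x <;> rfl
  · rintro (z | z) <;> induction z using induction_on <;> rfl
  · intro m z
    induction z using induction_on with | mk x c => cases x <;> rfl

theorem isoAsGSets_tensor_sum_right [MulAction (G × H) A] [MulAction (H × K) B]
    [MulAction (H × K) C] :
    IsoAsGSets (G × K) (BisetTensor G H K A (B ⊕ C))
      (BisetTensor G H K A B ⊕ BisetTensor G H K A C) := by
  refine ⟨⟨lift (fun a y => y.elim (fun b => .inl (mk (a, b))) (fun c => .inr (mk (a, c))))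
      ?_, Sum.elim (lift (fun a b => mk (a, .inl b)) ?_) (lift (fun a c => mk (a, .inr c)) ?_),
      ?_, ?_⟩, ?_⟩
  · rintro h a (b | c)
    exacts [congrArg Sum.inl (mk_eq_mk_smul h a b).symm,
      congrArg Sum.inr (mk_eq_mk_smul h a c).symm]
  · exact fun h a b => (mk_eq_mk_smul h a (Sum.inl b)).symm
  · exact fun h a c => (mk_eq_mk_smul h a (Sum.inr c)).symm
  · intro z
    induction z using induction_on with | mk a y => cases y <;> rfl
  · rintro (z | z) <;> induction z using induction_on <;> rfl
  · intro m z
    induction z using induction_on with | mk a y => cases y <;> rfl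

theorem isoAsGSets_grp_tensor (Z : Type*) [MulAction (G × K) Z] :
    IsoAsGSets (G × K) (BisetTensor G G K (BisetGrp G) Z) Z := by
  refine ⟨⟨lift (fun x z => (x.val, (1 : K)) • z) fun h x z => ?_,
    fun z => BisetTensor.mk (⟨1⟩, z), fun z => ?_, fun z => one_smul _ z⟩, fun m z => ?_⟩
  · simp [BisetGrp.smul_def, smul_smul]
  · induction z using induction_on with | mk x z =>
    refine (mk_eq_mk_smul x.val⁻¹ _ _).trans ?_
    simp [BisetGrp.smul_def, smul_smul, Prod.mk_one_one]
  · induction z using induction_on with | mk x z =>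
    show (m.1 * x.val * 1⁻¹, (1 : K)) • (((1 : G), m.2) • z) = m • (x.val, (1 : K)) • z
    rw [smul_smul, smul_smul]
    congr 1
    ext <;> simp

theorem isoAsGSets_tensor_grp (Z : Type*) [MulAction (G × K) Z] :
    IsoAsGSets (G × K) (BisetTensor G K K Z (BisetGrp K)) Z := by
  refine ⟨⟨lift (fun z x => ((1 : G), x.val⁻¹) • z) fun h z x => ?_,
    fun z => BisetTensor.mk (z, ⟨1⟩), fun z => ?_, fun z => ?_⟩, fun m z => ?_⟩
  · simp [BisetGrp.smul_def, smul_smul]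
  · induction z using induction_on with | mk z x =>
    refine (mk_eq_mk_smul x.val _ _).trans ?_
    simp [BisetGrp.smul_def, smul_smul, Prod.mk_one_one]
  · simp [Prod.mk_one_one]
  · induction z using induction_on with | mk z x =>
    show ((1 : G), (1 * x.val * m.2⁻¹)⁻¹) • ((m.1, (1 : K)) • z) = m • ((1 : G), x.val⁻¹) • z
    rw [smul_smul, smul_smul]
    congr 1
    ext <;> simp

end TensorIsos

section TwistedDiagonal

variable {G H : Type*} [Group G] [Group H] {R : Subgroup G} {S : Subgroup H}

theorem mem_twistedDiagonal (α : S ≃* R) (p : G × H) :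
    p ∈ twistedDiagonal R S α ↔ ∃ s : S, ((α s : G), (s : H)) = p :=
  Iff.rfl

theorem swap_mem_twistedDiagonal_symm (α : S ≃* R) (p : G × H) :
    p.swap ∈ twistedDiagonal S R α.symm ↔ p ∈ twistedDiagonal R S α := by
  simp only [mem_twistedDiagonal, Prod.ext_iff, Prod.fst_swap, Prod.snd_swap]
  constructor
  · rintro ⟨r, h₁, h₂⟩
    exact ⟨α.symm r, by simpa using h₂, h₁⟩
  · rintro ⟨s, h₁, h₂⟩
    exact ⟨α s, by simpa using h₂, h₁⟩

theorem twisted_mk_eq_mk_iff (α : S ≃* R) (p q : G × H) :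
    (QuotientGroup.mk p : (G × H) ⧸ twistedDiagonal R S α) = QuotientGroup.mk q ↔
      ∃ s : S, q = (p.1 * α s, p.2 * s) := by
  rw [QuotientGroup.eq, mem_twistedDiagonal]
  refine exists_congr fun s => ?_
  rw [eq_inv_mul_iff_mul_eq, eq_comm]
  rfl

theorem twisted_mk_mul (α : S ≃* R) (a : G) (b : H) (s : S) :
    (QuotientGroup.mk (a * α s, b * s) : (G × H) ⧸ twistedDiagonal R S α) =
      QuotientGroup.mk (a, b) :=
  ((twisted_mk_eq_mk_iff α (a, b) _).mpr ⟨s, rfl⟩).symm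

end TwistedDiagonal

section Opposite

variable {G H : Type*} [Group G] [Group H]

theorem isoAsGSets_op_sum (A B : Type*) [MulAction (G × H) A] [MulAction (G × H) B] :
    IsoAsGSets (H × G) (BisetOp H G (A ⊕ B)) (BisetOp H G A ⊕ BisetOp H G B) :=
  ⟨Equiv.refl _, by rintro m (a | b) <;> rfl⟩

theorem isoAsGSets_op_grp : IsoAsGSets (G × G) (BisetOp G G (BisetGrp G)) (BisetGrp G) := by
  refine ⟨⟨fun x => BisetGrp.mk (x : BisetGrp G).val⁻¹, fun x => (BisetGrp.mk x.val⁻¹ : BisetGrp G),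
    fun x => congrArg BisetGrp.mk (inv_inv (x : BisetGrp G).val),
    fun x => congrArg BisetGrp.mk (inv_inv x.val)⟩, fun m x => ?_⟩
  show (⟨(m.2 * (x : BisetGrp G).val * m.1⁻¹)⁻¹⟩ : BisetGrp G) = ⟨m.1 * x.val⁻¹ * m.2⁻¹⟩
  simp [mul_assoc]

variable {R : Subgroup G} {S : Subgroup H}

theorem isoAsGSets_op_twisted (α : S ≃* R) :
    IsoAsGSets (H × G) (BisetOp H G ((G × H) ⧸ twistedDiagonal R S α))
      ((H × G) ⧸ twistedDiagonal S R α.symm) := by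
  have hrel : ∀ p q : G × H, QuotientGroup.leftRel (twistedDiagonal R S α) p q ↔
      QuotientGroup.leftRel (twistedDiagonal S R α.symm) p.swap q.swap := fun p q => by
    rw [QuotientGroup.leftRel_apply, QuotientGroup.leftRel_apply, ← Prod.swap_inv,
      ← Prod.swap_mul, swap_mem_twistedDiagonal_symm]
  refine ⟨Quotient.congr (Equiv.prodComm G H) hrel, fun m x => ?_⟩
  induction x using Quotient.inductionOn
  rfl

end Opposite

def Subgroup.IsMalnormal {G : Type*} [Group G] (H : Subgroup G) : Prop :=
  ∀ g : G, g ∉ H → H ⊓ Subgroup.map (MulAut.conj g).toMonoidHom H = ⊥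

theorem Subgroup.IsMalnormal.eq_of_mul_mul_eq {G : Type*} [Group G] {H : Subgroup G}
    (hH : H.IsMalnormal) {g : G} (hg : g ∉ H) {s t s' t' : H}
    (h : (s : G) * g * t = s' * g * t') : s = s' ∧ t = t' := by
  have hmem : (s' : G)⁻¹ * s ∈ H ⊓ H.map (MulAut.conj g).toMonoidHom := by
    refine ⟨H.mul_mem (H.inv_mem s'.2) s.2, ⟨t' * (t : G)⁻¹, H.mul_mem t'.2 (H.inv_mem t.2), ?_⟩⟩
    simp only [MulEquiv.coe_toMonoidHom, MulAut.conj_apply]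
    calc g * (t' * (t : G)⁻¹) * g⁻¹ = (s' : G)⁻¹ * (s' * g * t') * (t : G)⁻¹ * g⁻¹ := by group
      _ = (s' : G)⁻¹ * s := by rw [← h]; group
  rw [hH g hg, Subgroup.mem_bot, inv_mul_eq_one] at hmem
  obtain rfl : s = s' := Subtype.ext hmem.symm
  exact ⟨rfl, Subtype.ext (mul_left_cancel h)⟩

section DoubleCosetCoords

variable {G : Type*} [Group G] (H : Subgroup G)

def Subgroup.NontrivialDoubleCoset : Type _ :=
  {D : DoubleCoset.Quotient (H : Set G) H // D.out ∉ H}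

theorem exists_eq_mul_doubleCoset_out_mul (w : G) :
    ∃ st : H × H, w = st.1 * (DoubleCoset.mk H H w).out * st.2 := by
  obtain ⟨s, hs, t, ht, h⟩ := (DoubleCoset.eq H H _ w).mp (DoubleCoset.out_eq' H H _)
  exact ⟨(⟨s, hs⟩, ⟨t, ht⟩), h⟩

noncomputable def doubleCosetCoords (w : G) : H × H :=
  (exists_eq_mul_doubleCoset_out_mul H w).choose

theorem eq_doubleCosetCoords_mul_out_mul (w : G) :
    w = (doubleCosetCoords H w).1 * (DoubleCoset.mk H H w).out * (doubleCosetCoords H w).2 :=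
  (exists_eq_mul_doubleCoset_out_mul H w).choose_spec

theorem doubleCoset_out_eq (w : G) :
    (DoubleCoset.mk H H w).out =
      ((doubleCosetCoords H w).1 : G)⁻¹ * w * ((doubleCosetCoords H w).2 : G)⁻¹ := by
  rw [eq_mul_inv_iff_mul_eq, eq_inv_mul_iff_mul_eq, ← mul_assoc]
  exact (eq_doubleCosetCoords_mul_out_mul H w).symm

variable {H}

theorem mul_mul_mem_iff (s t : H) {w : G} : (s : G) * w * t ∈ H ↔ w ∈ H := by
  rw [H.mul_mem_cancel_right t.2, H.mul_mem_cancel_left s.2]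

theorem doubleCoset_out_notMem {w : G} (hw : w ∉ H) : (DoubleCoset.mk H H w).out ∉ H := by
  rwa [eq_doubleCosetCoords_mul_out_mul H w, mul_mul_mem_iff] at hw

theorem doubleCoset_mk_mul_mul (s t : H) (w : G) :
    DoubleCoset.mk H H (s * w * t) = DoubleCoset.mk H H w :=
  (DoubleCoset.eq H H _ _).mpr ⟨_, H.inv_mem s.2, _, H.inv_mem t.2, by group⟩

theorem doubleCosetCoords_eq (hH : H.IsMalnormal) {w : G} (hw : w ∉ H) {s t : H}
    (h : w = s * (DoubleCoset.mk H H w).out * t) : doubleCosetCoords H w = (s, t) := by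
  obtain ⟨h₁, h₂⟩ := hH.eq_of_mul_mul_eq (doubleCoset_out_notMem hw)
    ((eq_doubleCosetCoords_mul_out_mul H w).symm.trans h)
  exact Prod.ext h₁ h₂

theorem doubleCosetCoords_mul_mul (hH : H.IsMalnormal) {w : G} (hw : w ∉ H) (s t : H) :
    doubleCosetCoords H (s * w * t) =
      (s * (doubleCosetCoords H w).1, (doubleCosetCoords H w).2 * t) := by
  refine doubleCosetCoords_eq hH (by rwa [mul_mul_mem_iff]) ?_
  rw [doubleCoset_mk_mul_mul]
  conv_lhs => rw [eq_doubleCosetCoords_mul_out_mul H w]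
  simp [mul_assoc]

end DoubleCosetCoords

section TwistedTensor

abbrev TwistedBiset {G : Type*} [Group G] (H : Subgroup G) (α : H ≃* H) : Type _ :=
  (G × G) ⧸ twistedDiagonal H H α

variable {G : Type*} [Group G] {H : Subgroup G} (α β : H ≃* H)

def twistedTensorMk (a w d : G) :
    BisetTensor G G G (TwistedBiset H α) (TwistedBiset H β) :=
  BisetTensor.mk (QuotientGroup.mk (a, 1), QuotientGroup.mk (w, d))

theorem bisetTensor_mk_eq_twistedTensorMk (a b c d : G) :
    (BisetTensor.mk (QuotientGroup.mk (a, b), QuotientGroup.mk (c, d)) :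
      BisetTensor G G G (TwistedBiset H α) (TwistedBiset H β)) =
      twistedTensorMk α β a (b⁻¹ * c) d := by
  refine (BisetTensor.mk_eq_mk_smul b⁻¹ _ _).trans ?_
  simp [twistedTensorMk]

@[elab_as_elim]
theorem twistedTensorMk_induction {motive : BisetTensor G G G (TwistedBiset H α)
      (TwistedBiset H β) → Prop}
    (z) (h : ∀ a w d, motive (twistedTensorMk α β a w d)) : motive z := by
  induction z using BisetTensor.induction_on with | mk x y =>
  induction x using QuotientGroup.induction_on with | H p =>
  induction y using QuotientGroup.induction_on with | H q =>
  rw [bisetTensor_mk_eq_twistedTensorMk]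
  exact h _ _ _

theorem smul_twistedTensorMk (m : G × G) (a w d : G) :
    m • twistedTensorMk α β a w d = twistedTensorMk α β (m.1 * a) w (m.2 * d) := by
  simp [twistedTensorMk, BisetTensor.smul_mk]

theorem twistedTensorMk_move (a w d : G) (s t : H) :
    twistedTensorMk α β (a * α s) (s⁻¹ * w * β t) (d * t) = twistedTensorMk α β a w d := by
  have hα : (QuotientGroup.mk (a * α s, (s : G)) : TwistedBiset H α) =
      QuotientGroup.mk (a, 1) := by
    simpa using twisted_mk_mul α a 1 s
  rw [twistedTensorMk, twisted_mk_mul, BisetTensor.mk_eq_mk_smul (s : G)]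
  simp [twistedTensorMk, hα]

/- By `twistedTensorMk_move`, if `w = s * g * t` with `g` the chosen representative of `HwH`, then
`twistedTensorMk α β a w d = twistedTensorMk α β (a * α s) g (d * (β⁻¹ t)⁻¹)`. -/
open scoped Classical in
noncomputable def twistedTensorSplit (a w d : G) :
    TwistedBiset H (β.trans α) ⊕ Σ _ : H.NontrivialDoubleCoset, G × G :=
  if hw : w ∈ H then .inl (QuotientGroup.mk (a * α ⟨w, hw⟩, d))
  else .inr ⟨⟨DoubleCoset.mk H H w, doubleCoset_out_notMem hw⟩,
    (a * α (doubleCosetCoords H w).1, d * (β.symm (doubleCosetCoords H w).2)⁻¹)⟩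

noncomputable def twistedTensorMerge :
    TwistedBiset H (β.trans α) ⊕ (Σ _ : H.NontrivialDoubleCoset, G × G) →
      BisetTensor G G G (TwistedBiset H α) (TwistedBiset H β) :=
  Sum.elim
    (Quotient.lift (fun p => twistedTensorMk α β p.1 1 p.2) fun p q hpq => by
      obtain ⟨t, rfl⟩ := (twisted_mk_eq_mk_iff _ p q).mp (Quotient.sound hpq)
      simpa using (twistedTensorMk_move α β p.1 1 p.2 (β t) t).symm)
    fun u => twistedTensorMk α β u.2.1 u.1.1.out u.2.2

@[simp]
theorem twistedTensorMerge_inl (p : G × G) :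
    twistedTensorMerge α β (.inl (QuotientGroup.mk p)) = twistedTensorMk α β p.1 1 p.2 :=
  rfl

@[simp]
theorem twistedTensorMerge_inr (D : H.NontrivialDoubleCoset) (p : G × G) :
    twistedTensorMerge α β (.inr ⟨D, p⟩) = twistedTensorMk α β p.1 D.1.out p.2 :=
  rfl

theorem twistedTensorMerge_split (a w d : G) :
    twistedTensorMerge α β (twistedTensorSplit α β a w d) = twistedTensorMk α β a w d := by
  unfold twistedTensorSplit
  split_ifs with hw
  · simpa using twistedTensorMk_move α β a w d ⟨w, hw⟩ 1
  · have h := twistedTensorMk_move α β a w d (doubleCosetCoords H w).1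
      (β.symm (doubleCosetCoords H w).2)⁻¹
    rw [map_inv, MulEquiv.apply_symm_apply] at h
    refine (twistedTensorMerge_inr α β _ _).trans ?_
    simpa [doubleCoset_out_eq] using h

theorem twistedTensorSplit_smul (m : G × G) (a w d : G) :
    twistedTensorSplit α β (m.1 * a) w (m.2 * d) = m • twistedTensorSplit α β a w d := by
  unfold twistedTensorSplit
  split_ifs <;> simp only [mul_assoc] <;> rfl

theorem twistedTensorSplit_one (a d : G) :
    twistedTensorSplit α β a 1 d = .inl (QuotientGroup.mk (a, d)) := by
  have h1 : (⟨1, H.one_mem⟩ : H) = 1 := rfl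
  simp [twistedTensorSplit, h1]

variable {α β} (hH : H.IsMalnormal)
include hH

theorem twistedTensorSplit_out (D : H.NontrivialDoubleCoset) (x y : G) :
    twistedTensorSplit α β x D.1.out y = .inr ⟨D, (x, y)⟩ := by
  have hD : DoubleCoset.mk H H D.1.out = D.1 := DoubleCoset.out_eq' H H D.1
  have hc : doubleCosetCoords H D.1.out = (1, 1) :=
    doubleCosetCoords_eq hH D.2 (by rw [hD]; simp)
  simp only [twistedTensorSplit, dif_neg D.2, hc]
  exact congrArg Sum.inr (Sigma.ext (Subtype.ext hD) (by simp))

theorem twistedTensorSplit_move (a w d : G) (s t : H) :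
    twistedTensorSplit α β (a * α s) (s⁻¹ * w * β t) (d * t) = twistedTensorSplit α β a w d := by
  by_cases hw : w ∈ H
  · have hw' : (s⁻¹ : H) * w * β t ∈ H := (mul_mul_mem_iff _ _).mpr hw
    have hmul : (⟨(s⁻¹ : H) * w * β t, hw'⟩ : H) = s⁻¹ * ⟨w, hw⟩ * β t := rfl
    simp only [twistedTensorSplit, dif_pos hw, dif_pos hw', hmul, map_mul, map_inv]
    rw [← twisted_mk_mul (β.trans α) (a * α ⟨w, hw⟩) d t]
    simp [mul_assoc]
  · have hw' : (s⁻¹ : H) * w * β t ∉ H := (mul_mul_mem_iff _ _).not.mpr hw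
    simp only [twistedTensorSplit, dif_neg hw, dif_neg hw', doubleCosetCoords_mul_mul hH hw]
    refine congrArg Sum.inr (Sigma.ext (Subtype.ext (doubleCoset_mk_mul_mul _ _ w)) ?_)
    simp [mul_assoc]

variable (α β)

noncomputable def twistedTensorSplitLift :
    BisetTensor G G G (TwistedBiset H α) (TwistedBiset H β) →
      TwistedBiset H (β.trans α) ⊕ Σ _ : H.NontrivialDoubleCoset, G × G :=
  BisetTensor.lift
    (Quotient.lift₂ (fun p q : G × G => twistedTensorSplit α β p.1 (p.2⁻¹ * q.1) q.2)
      fun p q p' q' hp hq => by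
        obtain ⟨s, rfl⟩ := (twisted_mk_eq_mk_iff α p p').mp (Quotient.sound hp)
        obtain ⟨t, rfl⟩ := (twisted_mk_eq_mk_iff β q q').mp (Quotient.sound hq)
        rw [← twistedTensorSplit_move hH p.1 (p.2⁻¹ * q.1) q.2 s t]
        simp [mul_assoc])
    fun h x y => by
      induction x using QuotientGroup.induction_on
      induction y using QuotientGroup.induction_on
      simp [mul_assoc]

theorem twistedTensorSplitLift_mk (a w d : G) :
    twistedTensorSplitLift α β hH (twistedTensorMk α β a w d) = twistedTensorSplit α β a w d := by
  simp [twistedTensorSplitLift, twistedTensorMk]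

theorem isoAsGSets_twisted_tensor_twisted :
    IsoAsGSets (G × G)
      (BisetTensor G G G (TwistedBiset H α) (TwistedBiset H β))
      (TwistedBiset H (β.trans α) ⊕ Σ _ : H.NontrivialDoubleCoset, G × G) := by
  refine ⟨⟨twistedTensorSplitLift α β hH, twistedTensorMerge α β, fun z => ?_, ?_⟩, fun m z => ?_⟩
  · induction z using twistedTensorMk_induction
    rw [twistedTensorSplitLift_mk, twistedTensorMerge_split]
  · rintro (y | ⟨D, x, y⟩)
    · induction y using QuotientGroup.induction_on
      rw [twistedTensorMerge_inl, twistedTensorSplitLift_mk, twistedTensorSplit_one]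
    · rw [twistedTensorMerge_inr, twistedTensorSplitLift_mk, twistedTensorSplit_out hH]
  · induction z using twistedTensorMk_induction with | h a w d =>
    show twistedTensorSplitLift α β hH (m • twistedTensorMk α β a w d) =
      m • twistedTensorSplitLift α β hH (twistedTensorMk α β a w d)
    rw [smul_twistedTensorMk, twistedTensorSplitLift_mk, twistedTensorSplitLift_mk,
      twistedTensorSplit_smul]

end TwistedTensor

section Rearrange

variable {M A B C D E F : Type*} [SMul M A] [SMul M B] [SMul M C] [SMul M D] [SMul M E]
  [SMul M F]

theorem IsoAsGSets.sum_rearrange_mul :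
    IsoAsGSets M (((A ⊕ B) ⊕ (C ⊕ (D ⊕ F))) ⊕ ((E ⊕ F) ⊕ E))
      ((A ⊕ D) ⊕ ((E ⊕ (C ⊕ F)) ⊕ (E ⊕ (B ⊕ F)))) := by
  refine ⟨⟨fun
      | .inl (.inl (.inl a)) => .inl (.inl a)
      | .inl (.inl (.inr b)) => .inr (.inr (.inr (.inl b)))
      | .inl (.inr (.inl c)) => .inr (.inl (.inr (.inl c)))
      | .inl (.inr (.inr (.inl d))) => .inl (.inr d)
      | .inl (.inr (.inr (.inr f))) => .inr (.inl (.inr (.inr f)))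
      | .inr (.inl (.inl e)) => .inr (.inl (.inl e))
      | .inr (.inl (.inr f)) => .inr (.inr (.inr (.inr f)))
      | .inr (.inr e) => .inr (.inr (.inl e)),
    fun
      | .inl (.inl a) => .inl (.inl (.inl a))
      | .inl (.inr d) => .inl (.inr (.inr (.inl d)))
      | .inr (.inl (.inl e)) => .inr (.inl (.inl e))
      | .inr (.inl (.inr (.inl c))) => .inl (.inr (.inl c))
      | .inr (.inl (.inr (.inr f))) => .inl (.inr (.inr (.inr f)))
      | .inr (.inr (.inl e)) => .inr (.inr e)
      | .inr (.inr (.inr (.inl b))) => .inl (.inl (.inr b))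
      | .inr (.inr (.inr (.inr f))) => .inr (.inl (.inr f)), ?_, ?_⟩, ?_⟩
  · rintro (((a | b) | (c | d | f)) | ((e | f) | e)) <;> rfl
  · rintro ((a | d) | ((e | c | f) | (e | b | f))) <;> rfl
  · rintro m (((a | b) | (c | d | f)) | ((e | f) | e)) <;> rfl

theorem IsoAsGSets.sum_rearrange_orthogonal :
    IsoAsGSets M (((A ⊕ B) ⊕ (C ⊕ (E ⊕ F))) ⊕ (E ⊕ F))
      (A ⊕ ((E ⊕ (C ⊕ F)) ⊕ (E ⊕ (B ⊕ F)))) := by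
  refine ⟨⟨fun
      | .inl (.inl (.inl a)) => .inl a
      | .inl (.inl (.inr b)) => .inr (.inr (.inr (.inl b)))
      | .inl (.inr (.inl c)) => .inr (.inl (.inr (.inl c)))
      | .inl (.inr (.inr (.inl e))) => .inr (.inl (.inl e))
      | .inl (.inr (.inr (.inr f))) => .inr (.inl (.inr (.inr f)))
      | .inr (.inl e) => .inr (.inr (.inl e))
      | .inr (.inr f) => .inr (.inr (.inr (.inr f))),
    fun
      | .inl a => .inl (.inl (.inl a))
      | .inr (.inl (.inl e)) => .inl (.inr (.inr (.inl e)))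
      | .inr (.inl (.inr (.inl c))) => .inl (.inr (.inl c))
      | .inr (.inl (.inr (.inr f))) => .inl (.inr (.inr (.inr f)))
      | .inr (.inr (.inl e)) => .inr (.inl e)
      | .inr (.inr (.inr (.inl b))) => .inl (.inl (.inr b))
      | .inr (.inr (.inr (.inr f))) => .inr (.inr f), ?_, ?_⟩, ?_⟩
  · rintro (((a | b) | (c | e | f)) | (e | f)) <;> rfl
  · rintro (a | ((e | c | f) | (e | b | f))) <;> rfl
  · rintro m (((a | b) | (c | e | f)) | (e | f)) <;> rfl

end Rearrange

section OrthogonalUnits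

variable {G : Type*} [Group G] {H : Subgroup G} (α β : H ≃* H) (hH : H.IsMalnormal)
include hH

theorem isoAsGSets_tensor_sum_grp_twisted :
    IsoAsGSets (G × G)
      (BisetTensor G G G (BisetGrp G ⊕ TwistedBiset H α) (BisetGrp G ⊕ TwistedBiset H β))
      ((BisetGrp G ⊕ TwistedBiset H β) ⊕
        (TwistedBiset H α ⊕ (TwistedBiset H (β.trans α) ⊕ Σ _ : H.NontrivialDoubleCoset, G × G))) :=
  isoAsGSets_tensor_sum_left.trans <| (isoAsGSets_grp_tensor _).sumCongr <|
    isoAsGSets_tensor_sum_right.trans <|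
      (isoAsGSets_tensor_grp _).sumCongr (isoAsGSets_twisted_tensor_twisted α β hH)

theorem isoAsGSets_sum_grp_twisted_tensor :
    IsoAsGSets (G × G) (BisetTensor G G G (BisetGrp G ⊕ TwistedBiset H α) (TwistedBiset H β))
      (TwistedBiset H β ⊕ (TwistedBiset H (β.trans α) ⊕ Σ _ : H.NontrivialDoubleCoset, G × G)) :=
  isoAsGSets_tensor_sum_left.trans <|
    (isoAsGSets_grp_tensor _).sumCongr (isoAsGSets_twisted_tensor_twisted α β hH)

theorem isoAsGSets_twisted_tensor_sum_grp :
    IsoAsGSets (G × G) (BisetTensor G G G (TwistedBiset H α) (BisetGrp G ⊕ TwistedBiset H β))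
      (TwistedBiset H α ⊕ (TwistedBiset H (β.trans α) ⊕ Σ _ : H.NontrivialDoubleCoset, G × G)) :=
  isoAsGSets_tensor_sum_right.trans <|
    (isoAsGSets_tensor_grp _).sumCongr (isoAsGSets_twisted_tensor_twisted α β hH)

local notation "Y" => TwistedBiset H (MulEquiv.refl H)

theorem isoAsGSets_orthogonalUnit_mul :
    IsoAsGSets (G × G)
      (BisetTensor G G G (BisetGrp G ⊕ TwistedBiset H α) (BisetGrp G ⊕ TwistedBiset H β) ⊕
        BisetTensor G G G Y Y ⊕ Y)
      ((BisetGrp G ⊕ TwistedBiset H (β.trans α)) ⊕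
        BisetTensor G G G (BisetGrp G ⊕ TwistedBiset H α) Y ⊕
        BisetTensor G G G Y (BisetGrp G ⊕ TwistedBiset H β)) :=
  ((isoAsGSets_tensor_sum_grp_twisted α β hH).sumCongr
    ((isoAsGSets_twisted_tensor_twisted _ _ hH).sumCongr (IsoAsGSets.refl _ _))).trans <|
    IsoAsGSets.sum_rearrange_mul.trans <| IsoAsGSets.symm <|
      (IsoAsGSets.refl _ _).sumCongr <|
        (isoAsGSets_sum_grp_twisted_tensor α _ hH).sumCongr
          (isoAsGSets_twisted_tensor_sum_grp _ β hH)

theorem isOrthogonalPair_sum_grp_twisted :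
    IsOrthogonalPair G G (BisetGrp G ⊕ TwistedBiset H α) Y := by
  have hX : IsoAsGSets (G × G) (BisetOp G G (BisetGrp G ⊕ TwistedBiset H α))
      (BisetGrp G ⊕ TwistedBiset H α.symm) :=
    (isoAsGSets_op_sum _ _).trans (isoAsGSets_op_grp.sumCongr (isoAsGSets_op_twisted α))
  have hY : IsoAsGSets (G × G) (BisetOp G G Y) Y := isoAsGSets_op_twisted _
  have hXX := ((IsoAsGSets.refl _ _).tensorCongr hX).trans
    (isoAsGSets_tensor_sum_grp_twisted α α.symm hH)
  rw [MulEquiv.symm_trans_self] at hXX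
  have hYY := ((IsoAsGSets.refl _ _).tensorCongr hY).trans
    (isoAsGSets_twisted_tensor_twisted (.refl H) (.refl H) hH)
  have hXY := ((IsoAsGSets.refl _ _).tensorCongr hY).trans
    (isoAsGSets_sum_grp_twisted_tensor α (.refl H) hH)
  have hYX := ((IsoAsGSets.refl _ _).tensorCongr hX).trans
    (isoAsGSets_twisted_tensor_sum_grp (.refl H) α.symm hH)
  exact (hXX.sumCongr hYY).trans <| IsoAsGSets.sum_rearrange_orthogonal.trans <|
    ((IsoAsGSets.refl _ _).sumCongr (hXY.sumCongr hYX)).symm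

end OrthogonalUnits

theorem statement17_general {G : Type*} [Group G] (H : Subgroup G)
    (hmal : ∀ g : G, g ∉ H → H ⊓ Subgroup.map (MulAut.conj g).toMonoidHom H = ⊥) :
    (∀ α β : ↥H ≃* ↥H,
      IsoAsGSets (G × G)
        (BisetTensor G G G
            (BisetGrp G ⊕ ((G × G) ⧸ twistedDiagonal H H α))
            (BisetGrp G ⊕ ((G × G) ⧸ twistedDiagonal H H β)) ⊕
          BisetTensor G G G
            ((G × G) ⧸ twistedDiagonal H H (MulEquiv.refl ↥H))
            ((G × G) ⧸ twistedDiagonal H H (MulEquiv.refl ↥H)) ⊕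
          ((G × G) ⧸ twistedDiagonal H H (MulEquiv.refl ↥H)))
        ((BisetGrp G ⊕ ((G × G) ⧸ twistedDiagonal H H (β.trans α))) ⊕
          BisetTensor G G G
            (BisetGrp G ⊕ ((G × G) ⧸ twistedDiagonal H H α))
            ((G × G) ⧸ twistedDiagonal H H (MulEquiv.refl ↥H)) ⊕
          BisetTensor G G G
            ((G × G) ⧸ twistedDiagonal H H (MulEquiv.refl ↥H))
            (BisetGrp G ⊕ ((G × G) ⧸ twistedDiagonal H H β)))) ∧
    (∀ α : ↥H ≃* ↥H,
      IsOrthogonalPair G G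
        (BisetGrp G ⊕ ((G × G) ⧸ twistedDiagonal H H α))
        ((G × G) ⧸ twistedDiagonal H H (MulEquiv.refl ↥H))) :=
  ⟨fun α β => isoAsGSets_orthogonalUnit_mul α β hmal,
    fun α => isOrthogonalPair_sum_grp_twisted α hmal⟩

/-- with `H` a malnormal proper nontrivial subgroup of `G`,
`X_α := G ⊔ (G×G)/Δ(H,α,H)` and `Y := (G×G)/Δ(H)`, one has
`(X_α ×_G X_β) ⊔ (Y ×_G Y) ⊔ Y ≅ X_{αβ} ⊔ (X_α ×_G Y) ⊔ (Y ×_G X_β)`, and `(X_α, Y)` is an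
orthogonal pair: this encodes the orthogonal units `γ_α = [Δ(G)] - [Δ(H)] + [Δ(H,α,H)]`
with `γ_α ·_G γ_β = γ_{αβ}`. -/
theorem statement17 {G : Type*} [Group G] [Finite G] (H : Subgroup G)
    (hbot : H ≠ ⊥) (htop : H ≠ ⊤)
    (hmal : ∀ g : G, g ∉ H → H ⊓ Subgroup.map (MulAut.conj g).toMonoidHom H = ⊥) :
    (∀ α β : ↥H ≃* ↥H,
      IsoAsGSets (G × G)
        (BisetTensor G G G
            (BisetGrp G ⊕ ((G × G) ⧸ twistedDiagonal H H α))
            (BisetGrp G ⊕ ((G × G) ⧸ twistedDiagonal H H β)) ⊕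
          BisetTensor G G G
            ((G × G) ⧸ twistedDiagonal H H (MulEquiv.refl ↥H))
            ((G × G) ⧸ twistedDiagonal H H (MulEquiv.refl ↥H)) ⊕
          ((G × G) ⧸ twistedDiagonal H H (MulEquiv.refl ↥H)))
        ((BisetGrp G ⊕ ((G × G) ⧸ twistedDiagonal H H (β.trans α))) ⊕
          BisetTensor G G G
            (BisetGrp G ⊕ ((G × G) ⧸ twistedDiagonal H H α))
            ((G × G) ⧸ twistedDiagonal H H (MulEquiv.refl ↥H)) ⊕
          BisetTensor G G G
            ((G × G) ⧸ twistedDiagonal H H (MulEquiv.refl ↥H))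
            (BisetGrp G ⊕ ((G × G) ⧸ twistedDiagonal H H β)))) ∧
    (∀ α : ↥H ≃* ↥H,
      IsOrthogonalPair G G
        (BisetGrp G ⊕ ((G × G) ⧸ twistedDiagonal H H α))
        ((G × G) ⧸ twistedDiagonal H H (MulEquiv.refl ↥H))) :=
  statement17_general H hmal
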